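/- Strict close-connectedness and shifted strict close-connectedness relative to the closely connected subspace are equivalent: let (P_1, ..., P_d, U = [[A, B], [C, D]]) be a GR-unitary colligation, and let N, N' and H_cc be the subspaces of H defined in the context. Then the following are equivalent: (1) H_cc ∩ N = {0} (the strictly-closely-connected subspace N^⊥ equals H_cc); (2) H_cc ∩ N' = {0} (the shifted strictly-closely-connected subspace (N')^⊥ equals H_cc); (3) P_k N ⊆ N and P_k N' ⊆ N' for every k ∈ {1, ..., d}. -/

import Mathlib

open ContinuousLinearMap

noncomputable section

variable {d : ℕ} {H E F : Type*}
  [NormedAddCommGroup H] [InnerProductSpace ℂ H] [CompleteSpace H]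
  [NormedAddCommGroup E] [InnerProductSpace ℂ E] [CompleteSpace E]
  [NormedAddCommGroup F] [InnerProductSpace ℂ F] [CompleteSpace F]

/-- `A^w = P_{i_N} A P_{i_{N-1}} A ⋯ P_{i_1} A` for a word `w = i_N i_{N-1} ⋯ i_1`. -/
def grWord (A : H →L[ℂ] H) (P : Fin d → H →L[ℂ] H) {N : ℕ} (w : Fin N → Fin d) :
    H →L[ℂ] H :=
  (List.ofFn fun j => P (w j) * A).prod

/-- The abelianized Givone–Roesser functional calculus `(A^𝔞)^n = ∑_{𝔞(w) = n} A^w`. -/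
def grAb (A : H →L[ℂ] H) (P : Fin d → H →L[ℂ] H) (n : Fin d → ℕ) : H →L[ℂ] H :=
  ∑ w ∈ Finset.univ.filter
      (fun w : Fin (∑ k, n k) → Fin d =>
        ∀ k, (Finset.univ.filter fun j => w j = k).card = n k),
    grWord A P w

/-- The kernel `N` of the de Branges–Rovnyak map
`h ↦ [C(I - Z(z)A)⁻¹ h ; B*(I - Z(z)⁻¹A*)⁻¹ Z(z)⁻¹ h]`, expressed through Laurent
coefficients. -/
def sccKer (A : H →L[ℂ] H) (P : Fin d → H →L[ℂ] H) (B : E →L[ℂ] H) (C : H →L[ℂ] F) :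
    Set H :=
  {h | (∀ n : Fin d → ℕ, C (grAb A P n h) = 0) ∧
    ∀ m : Fin d → ℕ,
      (∑ k ∈ Finset.univ.filter fun k => 1 ≤ m k,
        adjoint B (grAb (adjoint A) P (fun j => m j - if j = k then 1 else 0) (P k h)))
      = 0}

/-- The kernel `N'` of the shifted de Branges–Rovnyak map
`h ↦ [C(I - Z(z)A)⁻¹ Z(z) h ; B*(I - Z(z)⁻¹A*)⁻¹ h]`, expressed through Laurent
coefficients. -/
def ssccKer (A : H →L[ℂ] H) (P : Fin d → H →L[ℂ] H) (B : E →L[ℂ] H) (C : H →L[ℂ] F) :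
    Set H :=
  {h | (∀ m : Fin d → ℕ,
      (∑ k ∈ Finset.univ.filter fun k => 1 ≤ m k,
        C (grAb A P (fun j => m j - if j = k then 1 else 0) (P k h))) = 0) ∧
    ∀ n : Fin d → ℕ, adjoint B (grAb (adjoint A) P n h) = 0}

/-- `H_cc`: the smallest closed subspace of `H` containing `ran B` and `ran C*` and
invariant under `A`, `A*` and each `P_k`. -/
def ccSpace (A : H →L[ℂ] H) (P : Fin d → H →L[ℂ] H) (B : E →L[ℂ] H) (C : H →L[ℂ] F) :
    Submodule ℂ H :=
  sInf {M : Submodule ℂ H | IsClosed (M : Set H) ∧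
    LinearMap.range (B : E →ₗ[ℂ] H) ≤ M ∧ LinearMap.range (adjoint C : F →ₗ[ℂ] H) ≤ M ∧
    (∀ x ∈ M, A x ∈ M) ∧ (∀ x ∈ M, adjoint A x ∈ M) ∧ ∀ k, ∀ x ∈ M, P k x ∈ M}

/-!
Unitarity of the colligation makes `A` map `N` into `N'` and `A*` map `N'` into `N`, while both
kernels contain `H_ccᗮ`, the largest closed subspace reducing `A` and every `P_k` on which `C`
and `B*` vanish. If `H_cc ∩ N = 0` and `x ∈ H_cc ∩ N'`, then `A* x ∈ H_cc ∩ N`, so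
`A* x = 0 = B* x` and `x = A A* x + B B* x = 0`; symmetrically with `A*A + C*C = I`. When both
intersections vanish, `N = N' = H_ccᗮ`, which is `P_k`-invariant. Conversely, the coefficients
defining `N` and `N'` differ by a shift along one `P_k`, so invariance of both under every `P_k`
forces `N = N'`; then `N` reduces `A` and every `P_k` and is annihilated by `C` and `B*`, hence
is orthogonal to `H_cc`.
-/

section Words

variable {V : Type*} [NormedAddCommGroup V] [InnerProductSpace ℂ V]
  (A : V →L[ℂ] V) (P : Fin d → V →L[ℂ] V)

def letterCount {N : ℕ} (w : Fin N → Fin d) (k : Fin d) : ℕ :=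
  (Finset.univ.filter fun j => w j = k).card

/-- `grAb` with the word length as a separate parameter, which avoids rewriting inside the
dependent type `Fin (∑ k, n k)`. -/
def grAbOfLength (N : ℕ) (n : Fin d → ℕ) : V →L[ℂ] V :=
  ∑ w ∈ Finset.univ.filter (fun w : Fin N → Fin d => ∀ k, letterCount w k = n k), grWord A P w

theorem grAb_eq_grAbOfLength (n : Fin d → ℕ) : grAb A P n = grAbOfLength A P (∑ k, n k) n :=
  rfl

theorem grAb_zero : grAb A P 0 = 1 := by
  simp [grAb_eq_grAbOfLength, grAbOfLength, grWord, letterCount]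

theorem grWord_snoc {N : ℕ} (v : Fin N → Fin d) (k : Fin d) :
    grWord A P (Fin.snoc v k : Fin (N + 1) → Fin d) = grWord A P v * (P k * A) := by
  rw [grWord, grWord, List.ofFn_succ', List.prod_concat]
  simp

theorem letterCount_snoc {N : ℕ} (v : Fin N → Fin d) (k k' : Fin d) :
    letterCount (Fin.snoc v k : Fin (N + 1) → Fin d) k' =
      letterCount v k' + if k' = k then 1 else 0 := by
  simp only [letterCount, Finset.card_filter, Fin.sum_univ_castSucc, Fin.snoc_castSucc,
    Fin.snoc_last, eq_comm (a := k)]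

theorem letterCount_snoc_eq_iff {N : ℕ} (v : Fin N → Fin d) (k : Fin d) (m : Fin d → ℕ) :
    (∀ k', letterCount (Fin.snoc v k : Fin (N + 1) → Fin d) k' = m k') ↔
      1 ≤ m k ∧ ∀ k', letterCount v k' = m k' - if k' = k then 1 else 0 := by
  simp only [letterCount_snoc]
  constructor
  · intro h
    refine ⟨by have := h k; rw [if_pos rfl] at this; omega, fun k' => ?_⟩
    have := h k'
    split_ifs at this ⊢ <;> omega
  · rintro ⟨hk, h⟩ k'
    have := h k'
    split_ifs at this ⊢ with hk'
    · subst hk'; omega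
    · omega

theorem grAbOfLength_succ (N : ℕ) (m : Fin d → ℕ) :
    grAbOfLength A P (N + 1) m = ∑ k ∈ Finset.univ.filter (fun k => 1 ≤ m k),
      grAbOfLength A P N (fun j => m j - if j = k then 1 else 0) * (P k * A) := by
  simp only [grAbOfLength, Finset.sum_mul]
  rw [Finset.sum_sigma']
  refine Finset.sum_nbij' (fun w => ⟨w (Fin.last N), Fin.init w⟩)
    (fun p => Fin.snoc p.2 p.1) ?_ ?_ ?_ ?_ ?_
  · intro w hw
    simp only [Finset.mem_filter, Finset.mem_univ, true_and] at hw
    have := (letterCount_snoc_eq_iff (Fin.init w) (w (Fin.last N)) m).mp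
      (by rwa [Fin.snoc_init_self])
    simpa using this
  · rintro ⟨k, v⟩ hp
    simpa [letterCount_snoc_eq_iff] using hp
  · intro w _
    exact Fin.snoc_init_self w
  · rintro ⟨k, v⟩ _
    simp
  · intro w _
    conv_lhs => rw [← Fin.snoc_init_self w]
    exact grWord_snoc A P _ _

theorem sum_sub_ite_eq {m : Fin d → ℕ} {k : Fin d} (hk : 1 ≤ m k) :
    ∑ j, (m j - if j = k then 1 else 0) = (∑ j, m j) - 1 := by
  rw [Finset.sum_tsub_distrib _ fun j _ => by split_ifs with h <;> simp [h, hk]]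
  simp

theorem grAb_apply_eq_sum {m : Fin d → ℕ} (hm : m ≠ 0) (x : V) :
    grAb A P m x = ∑ k ∈ Finset.univ.filter (fun k => 1 ≤ m k),
      grAb A P (fun j => m j - if j = k then 1 else 0) (P k (A x)) := by
  obtain ⟨N, hN⟩ : ∃ N, ∑ k, m k = N + 1 :=
    Nat.exists_eq_succ_of_ne_zero fun h => hm (funext (Finset.sum_eq_zero_iff.mp h · (by simp)))
  rw [grAb_eq_grAbOfLength, hN, grAbOfLength_succ, sum_apply]
  refine Finset.sum_congr rfl fun k hk => ?_
  rw [grAb_eq_grAbOfLength, sum_sub_ite_eq (Finset.mem_filter.mp hk).2, hN]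
  rfl

variable {A P}

theorem mapsTo_grAb {K : Submodule ℂ V} (hA : Set.MapsTo A K K)
    (hP : ∀ k, Set.MapsTo (P k) K K) (n : Fin d → ℕ) : Set.MapsTo (grAb A P n) K K := by
  have hword {N : ℕ} (w : Fin N → Fin d) : Set.MapsTo (grWord A P w) K K :=
    List.prod_induction (fun T : V →L[ℂ] V => Set.MapsTo T K K)
      (fun S T hS hT => by simpa using hS.comp hT) (by simpa using Set.mapsTo_id _)
      (by simpa [List.mem_ofFn] using fun j => (hP (w j)).comp hA)
  intro x hx
  rw [grAb, sum_apply]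
  exact K.sum_mem fun w _ => hword w hx

end Words

section Projections

variable {V : Type*} [NormedAddCommGroup V] [NormedSpace ℂ V] {P : Fin d → V →L[ℂ] V}

theorem sum_proj_apply_eq_self (hPsum : ∑ k, P k = 1) (x : V) : ∑ k, P k x = x := by
  simpa using congr($hPsum x)

/-- The coefficient of `N` (or `N'`) at index `n + e_j`, evaluated at `P_j x`, is the unshifted
coefficient at `n`: only `k = j` survives because `P_k P_j = δ_kj P_j`. -/
theorem sum_filter_shift_proj_proj {β : Type*} [AddCommMonoid β]
    (hPidem : ∀ k, P k * P k = P k) (hPorth : ∀ j k, j ≠ k → P j * P k = 0)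
    (f : (Fin d → ℕ) → V → β) (hf : ∀ n, f n 0 = 0) (n : Fin d → ℕ) (j : Fin d) (x : V) :
    ∑ k ∈ Finset.univ.filter (fun k => 1 ≤ n k + if k = j then 1 else 0),
      f (fun i => (n i + if i = j then 1 else 0) - if i = k then 1 else 0) (P k (P j x)) =
      f n (P j x) := by
  rw [Finset.sum_eq_single_of_mem j (by simp) fun k _ hkj => ?_]
  · rw [← mul_apply_eq_comp, hPidem]
    simp
  · rw [← mul_apply_eq_comp, hPorth k j hkj, zero_apply, hf]

end Projections

theorem Submodule.coe_inter_eq_zero_iff_disjoint {R M : Type*} [Semiring R] [AddCommMonoid M]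
    [Module R M] (p q : Submodule R M) : (p : Set M) ∩ q = {0} ↔ Disjoint p q := by
  rw [← Submodule.coe_inf, ← Submodule.bot_coe (R := R), SetLike.coe_set_eq, disjoint_iff]

theorem Submodule.eq_orthogonal_of_disjoint {𝕜 V : Type*} [RCLike 𝕜] [NormedAddCommGroup V]
    [InnerProductSpace 𝕜 V] (K : Submodule 𝕜 V) [K.HasOrthogonalProjection] {S : Submodule 𝕜 V}
    (hS : Kᗮ ≤ S) (hKS : Disjoint K S) : S = Kᗮ := by
  calc S = (Kᗮ ⊔ K) ⊓ S := by
        rw [sup_comm, K.sup_orthogonal_of_hasOrthogonalProjection, top_inf_eq]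
    _ = Kᗮ := by rw [sup_inf_assoc_of_le K hS, disjoint_iff.mp hKS, sup_bot_eq]

theorem ContinuousLinearMap.mapsTo_orthogonal {𝕜 V : Type*} [RCLike 𝕜] [NormedAddCommGroup V]
    [InnerProductSpace 𝕜 V] [CompleteSpace V] {T : V →L[𝕜] V} {K : Submodule 𝕜 V}
    (h : Set.MapsTo (adjoint T) K K) : Set.MapsTo T Kᗮ Kᗮ :=
  (Module.End.mem_invtSubmodule_iff_mapsTo _).mp
    (orthogonal_mem_invtSubmodule ((Module.End.mem_invtSubmodule_iff_mapsTo _).mpr h))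

section Kernels

variable {U Y : Type*} [NormedAddCommGroup U] [InnerProductSpace ℂ U] [CompleteSpace U]
  [NormedAddCommGroup Y] [InnerProductSpace ℂ Y]
  {A : H →L[ℂ] H} {P : Fin d → H →L[ℂ] H} {B : U →L[ℂ] H} {C : H →L[ℂ] Y}

variable (A P B C) in
def sccKerSubmodule : Submodule ℂ H where
  carrier := sccKer A P B C
  add_mem' hx hy :=
    ⟨fun n => by simp only [map_add, hx.1 n, hy.1 n, add_zero],
     fun m => by simp only [map_add, Finset.sum_add_distrib, hx.2 m, hy.2 m, add_zero]⟩
  zero_mem' := ⟨fun n => by simp, fun m => by simp⟩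
  smul_mem' c x hx :=
    ⟨fun n => by simp only [map_smul, hx.1 n, smul_zero],
     fun m => by simp only [map_smul, ← Finset.smul_sum, hx.2 m, smul_zero]⟩

variable (A P B C) in
def ssccKerSubmodule : Submodule ℂ H where
  carrier := ssccKer A P B C
  add_mem' hx hy :=
    ⟨fun m => by simp only [map_add, Finset.sum_add_distrib, hx.1 m, hy.1 m, add_zero],
     fun n => by simp only [map_add, hx.2 n, hy.2 n, add_zero]⟩
  zero_mem' := ⟨fun m => by simp, fun n => by simp⟩
  smul_mem' c x hx :=
    ⟨fun m => by simp only [map_smul, ← Finset.smul_sum, hx.1 m, smul_zero],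
     fun n => by simp only [map_smul, hx.2 n, smul_zero]⟩

variable (A P B C) in
theorem coe_sccKerSubmodule : (sccKerSubmodule A P B C : Set H) = sccKer A P B C := rfl

variable (A P B C) in
theorem coe_ssccKerSubmodule : (ssccKerSubmodule A P B C : Set H) = ssccKer A P B C := rfl

theorem apply_eq_zero_of_mem_sccKer {h : H} (hh : h ∈ sccKer A P B C) : C h = 0 := by
  simpa [grAb_zero] using hh.1 0

theorem adjoint_apply_eq_zero_of_mem_ssccKer {h : H} (hh : h ∈ ssccKer A P B C) :
    adjoint B h = 0 := by
  simpa [grAb_zero] using hh.2 0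

theorem mapsTo_sccKer_ssccKer [CompleteSpace Y] {D : U →L[ℂ] Y}
    (hU4 : adjoint A * A + adjoint C ∘L C = 1) (hU5 : adjoint A ∘L B + adjoint C ∘L D = 0) :
    Set.MapsTo A (sccKer A P B C) (ssccKer A P B C) := by
  intro h hh
  have hCh := apply_eq_zero_of_mem_sccKer hh
  have hAA : adjoint A (A h) = h := by
    simpa [hCh] using congr($hU4 h)
  have hU5' : adjoint B ∘L A + adjoint D ∘L C = 0 := by
    simpa using congr(adjoint $hU5)
  have hBA : adjoint B (A h) = 0 := by
    simpa [hCh] using congr($hU5' h)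
  refine ⟨fun m => ?_, fun n => ?_⟩
  · rcases eq_or_ne m 0 with rfl | hm
    · simp
    · rw [← map_sum, ← grAb_apply_eq_sum A P hm h]
      exact hh.1 m
  · rcases eq_or_ne n 0 with rfl | hn
    · simpa [grAb_zero] using hBA
    · rw [grAb_apply_eq_sum (adjoint A) P hn, map_sum, hAA]
      exact hh.2 n

theorem adjoint_mapsTo_ssccKer_sccKer [CompleteSpace Y] {D : U →L[ℂ] Y}
    (hU1 : A * adjoint A + B ∘L adjoint B = 1) (hU2 : A ∘L adjoint C + B ∘L adjoint D = 0) :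
    Set.MapsTo (adjoint A) (ssccKer A P B C) (sccKer A P B C) := by
  intro h hh
  have hBh := adjoint_apply_eq_zero_of_mem_ssccKer hh
  have hAA : A (adjoint A h) = h := by
    simpa [hBh] using congr($hU1 h)
  have hU2' : C ∘L adjoint A + D ∘L adjoint B = 0 := by
    simpa using congr(adjoint $hU2)
  have hCA : C (adjoint A h) = 0 := by
    simpa [hBh] using congr($hU2' h)
  refine ⟨fun n => ?_, fun m => ?_⟩
  · rcases eq_or_ne n 0 with rfl | hn
    · simpa [grAb_zero] using hCA
    · rw [grAb_apply_eq_sum A P hn, map_sum, hAA]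
      exact hh.1 n
  · rcases eq_or_ne m 0 with rfl | hm
    · simp
    · rw [← map_sum, ← grAb_apply_eq_sum (adjoint A) P hm h]
      exact hh.2 m

theorem sccKer_subset_ssccKer (hPsum : ∑ k, P k = 1) (hPidem : ∀ k, P k * P k = P k)
    (hPorth : ∀ j k, j ≠ k → P j * P k = 0)
    (hPN : ∀ k, Set.MapsTo (P k) (sccKer A P B C) (sccKer A P B C)) :
    sccKer A P B C ⊆ ssccKer A P B C := by
  intro h hh
  refine ⟨fun m => Finset.sum_eq_zero fun k _ => (hPN k hh).1 _, fun n => ?_⟩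
  rw [← sum_proj_apply_eq_self hPsum h, map_sum, map_sum]
  refine Finset.sum_eq_zero fun j _ => ?_
  rw [← sum_filter_shift_proj_proj hPidem hPorth
    (fun n y => adjoint B (grAb (adjoint A) P n y)) (by simp) n j h]
  exact (hPN j hh).2 _

theorem ssccKer_subset_sccKer (hPsum : ∑ k, P k = 1) (hPidem : ∀ k, P k * P k = P k)
    (hPorth : ∀ j k, j ≠ k → P j * P k = 0)
    (hPN' : ∀ k, Set.MapsTo (P k) (ssccKer A P B C) (ssccKer A P B C)) :
    ssccKer A P B C ⊆ sccKer A P B C := by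
  intro h hh
  refine ⟨fun n => ?_, fun m => Finset.sum_eq_zero fun k _ => (hPN' k hh).2 _⟩
  rw [← sum_proj_apply_eq_self hPsum h, map_sum, map_sum]
  refine Finset.sum_eq_zero fun j _ => ?_
  rw [← sum_filter_shift_proj_proj hPidem hPorth (fun n y => C (grAb A P n y)) (by simp) n j h]
  exact (hPN' j hh).1 _

variable (A P B C) in
/-- `(H_cc)ᗮ` is the largest closed subspace with these properties. -/
structure IsNullReducing (M : Submodule ℂ H) : Prop where
  mapsTo : Set.MapsTo A M M
  adjoint_mapsTo : Set.MapsTo (adjoint A) M M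
  proj_mapsTo : ∀ k, Set.MapsTo (P k) M M
  apply_eq_zero : ∀ x ∈ M, C x = 0
  adjoint_apply_eq_zero : ∀ x ∈ M, adjoint B x = 0

theorem IsNullReducing.le_sccKer {M : Submodule ℂ H} (hM : IsNullReducing A P B C M) :
    M ≤ sccKerSubmodule A P B C := fun _ hx =>
  ⟨fun n => hM.apply_eq_zero _ (mapsTo_grAb hM.mapsTo hM.proj_mapsTo n hx),
   fun _ => Finset.sum_eq_zero fun k _ => hM.adjoint_apply_eq_zero _
    (mapsTo_grAb hM.adjoint_mapsTo hM.proj_mapsTo _ (hM.proj_mapsTo k hx))⟩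

theorem IsNullReducing.le_ssccKer {M : Submodule ℂ H} (hM : IsNullReducing A P B C M) :
    M ≤ ssccKerSubmodule A P B C := fun _ hx =>
  ⟨fun _ => Finset.sum_eq_zero fun k _ => hM.apply_eq_zero _
    (mapsTo_grAb hM.mapsTo hM.proj_mapsTo _ (hM.proj_mapsTo k hx)),
   fun n => hM.adjoint_apply_eq_zero _ (mapsTo_grAb hM.adjoint_mapsTo hM.proj_mapsTo n hx)⟩

theorem isNullReducing_sccKer [CompleteSpace Y] {D : U →L[ℂ] Y} (hPsum : ∑ k, P k = 1)
    (hPidem : ∀ k, P k * P k = P k) (hPorth : ∀ j k, j ≠ k → P j * P k = 0)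
    (hU1 : A * adjoint A + B ∘L adjoint B = 1) (hU2 : A ∘L adjoint C + B ∘L adjoint D = 0)
    (hU4 : adjoint A * A + adjoint C ∘L C = 1) (hU5 : adjoint A ∘L B + adjoint C ∘L D = 0)
    (hPN : ∀ k, Set.MapsTo (P k) (sccKer A P B C) (sccKer A P B C))
    (hPN' : ∀ k, Set.MapsTo (P k) (ssccKer A P B C) (ssccKer A P B C)) :
    IsNullReducing A P B C (sccKerSubmodule A P B C) where
  mapsTo _ hx :=
    ssccKer_subset_sccKer hPsum hPidem hPorth hPN' (mapsTo_sccKer_ssccKer hU4 hU5 hx)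
  adjoint_mapsTo _ hx :=
    adjoint_mapsTo_ssccKer_sccKer hU1 hU2 (sccKer_subset_ssccKer hPsum hPidem hPorth hPN hx)
  proj_mapsTo := hPN
  apply_eq_zero _ hx := apply_eq_zero_of_mem_sccKer hx
  adjoint_apply_eq_zero _ hx :=
    adjoint_apply_eq_zero_of_mem_ssccKer (sccKer_subset_ssccKer hPsum hPidem hPorth hPN hx)

end Kernels

section CloselyConnected

variable {U Y : Type*} [NormedAddCommGroup U] [InnerProductSpace ℂ U]
  [NormedAddCommGroup Y] [InnerProductSpace ℂ Y] [CompleteSpace Y]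
  {A : H →L[ℂ] H} {P : Fin d → H →L[ℂ] H} {B : U →L[ℂ] H} {C : H →L[ℂ] Y}

theorem isClosed_ccSpace : IsClosed (ccSpace A P B C : Set H) := by
  rw [ccSpace, Submodule.coe_sInf]
  exact isClosed_biInter fun _ hM => hM.1

instance : CompleteSpace (ccSpace A P B C) := isClosed_ccSpace.completeSpace_coe

theorem range_le_ccSpace : LinearMap.range (B : U →ₗ[ℂ] H) ≤ ccSpace A P B C :=
  le_sInf fun _ hM => hM.2.1

theorem range_adjoint_le_ccSpace : LinearMap.range (adjoint C : Y →ₗ[ℂ] H) ≤ ccSpace A P B C :=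
  le_sInf fun _ hM => hM.2.2.1

theorem mapsTo_ccSpace : Set.MapsTo A (ccSpace A P B C) (ccSpace A P B C) := fun x hx =>
  Submodule.mem_sInf.mpr fun M hM => hM.2.2.2.1 x (Submodule.mem_sInf.mp hx M hM)

theorem adjoint_mapsTo_ccSpace : Set.MapsTo (adjoint A) (ccSpace A P B C) (ccSpace A P B C) :=
  fun x hx => Submodule.mem_sInf.mpr fun M hM => hM.2.2.2.2.1 x (Submodule.mem_sInf.mp hx M hM)

theorem proj_mapsTo_ccSpace (k : Fin d) :
    Set.MapsTo (P k) (ccSpace A P B C) (ccSpace A P B C) := fun x hx =>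
  Submodule.mem_sInf.mpr fun M hM => hM.2.2.2.2.2 k x (Submodule.mem_sInf.mp hx M hM)

theorem isNullReducing_orthogonal_ccSpace [CompleteSpace U] (hPsa : ∀ k, IsSelfAdjoint (P k)) :
    IsNullReducing A P B C (ccSpace A P B C)ᗮ where
  mapsTo := mapsTo_orthogonal adjoint_mapsTo_ccSpace
  adjoint_mapsTo := mapsTo_orthogonal (by simpa using mapsTo_ccSpace)
  proj_mapsTo k := mapsTo_orthogonal (by simpa [(hPsa k).adjoint_eq] using proj_mapsTo_ccSpace k)
  apply_eq_zero x hx := by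
    simpa [orthogonal_range] using Submodule.orthogonal_le range_adjoint_le_ccSpace hx
  adjoint_apply_eq_zero x hx := by
    simpa [orthogonal_range] using Submodule.orthogonal_le range_le_ccSpace hx

theorem IsNullReducing.disjoint_ccSpace [CompleteSpace U] (hPsa : ∀ k, IsSelfAdjoint (P k))
    {M : Submodule ℂ H} (hM : IsNullReducing A P B C M) : Disjoint (ccSpace A P B C) M := by
  have hle : ccSpace A P B C ≤ Mᗮ := by
    refine sInf_le ⟨M.isClosed_orthogonal, ?_, ?_, fun x hx => ?_, fun x hx => ?_,
      fun k x hx => ?_⟩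
    · rintro _ ⟨e, rfl⟩
      refine (Submodule.mem_orthogonal _ _).mpr fun u hu => ?_
      rw [coe_coe, ← adjoint_inner_left, hM.adjoint_apply_eq_zero u hu, inner_zero_left]
    · rintro _ ⟨f, rfl⟩
      refine (Submodule.mem_orthogonal _ _).mpr fun u hu => ?_
      rw [coe_coe, adjoint_inner_right, hM.apply_eq_zero u hu, inner_zero_left]
    · exact mapsTo_orthogonal hM.adjoint_mapsTo hx
    · exact mapsTo_orthogonal (by simpa using hM.mapsTo) hx
    · exact mapsTo_orthogonal (by simpa [(hPsa k).adjoint_eq] using hM.proj_mapsTo k) hx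
  exact (Submodule.orthogonal_disjoint M).symm.mono_left hle

theorem disjoint_sccKer_iff_disjoint_ssccKer [CompleteSpace U] {D : U →L[ℂ] Y}
    (hU1 : A * adjoint A + B ∘L adjoint B = 1) (hU2 : A ∘L adjoint C + B ∘L adjoint D = 0)
    (hU4 : adjoint A * A + adjoint C ∘L C = 1) (hU5 : adjoint A ∘L B + adjoint C ∘L D = 0) :
    Disjoint (ccSpace A P B C) (sccKerSubmodule A P B C) ↔
      Disjoint (ccSpace A P B C) (ssccKerSubmodule A P B C) := by
  simp only [Submodule.disjoint_def]
  constructor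
  · intro h x hx hx'
    have hAx : adjoint A x = 0 :=
      h _ (adjoint_mapsTo_ccSpace hx) (adjoint_mapsTo_ssccKer_sccKer hU1 hU2 hx')
    simpa [hAx, adjoint_apply_eq_zero_of_mem_ssccKer hx'] using congr($hU1 x).symm
  · intro h x hx hx'
    have hAx : A x = 0 := h _ (mapsTo_ccSpace hx) (mapsTo_sccKer_ssccKer hU4 hU5 hx')
    simpa [hAx, apply_eq_zero_of_mem_sccKer hx'] using congr($hU4 x).symm

end CloselyConnected

theorem scc_iff_sscc_iff_proj_invariant_general
    (P : Fin d → H →L[ℂ] H)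
    (hPsa : ∀ k, IsSelfAdjoint (P k))
    (hPidem : ∀ k, P k * P k = P k)
    (hPorth : ∀ j k, j ≠ k → P j * P k = 0)
    (hPsum : ∑ k, P k = 1)
    (A : H →L[ℂ] H) (B : E →L[ℂ] H) (C : H →L[ℂ] F) (D : E →L[ℂ] F)
    (hU1 : A * adjoint A + B ∘L adjoint B = 1)
    (hU2 : A ∘L adjoint C + B ∘L adjoint D = 0)
    (hU4 : adjoint A * A + adjoint C ∘L C = 1)
    (hU5 : adjoint A ∘L B + adjoint C ∘L D = 0) :
    ((ccSpace A P B C : Set H) ∩ sccKer A P B C = {0} ↔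
      (ccSpace A P B C : Set H) ∩ ssccKer A P B C = {0}) ∧
    ((ccSpace A P B C : Set H) ∩ sccKer A P B C = {0} ↔
      ∀ k, (P k) '' sccKer A P B C ⊆ sccKer A P B C ∧
        (P k) '' ssccKer A P B C ⊆ ssccKer A P B C) := by
  rw [← coe_sccKerSubmodule, ← coe_ssccKerSubmodule]
  simp only [Submodule.coe_inter_eq_zero_iff_disjoint, ← Set.mapsTo_iff_image_subset]
  have h12 := disjoint_sccKer_iff_disjoint_ssccKer (P := P) hU1 hU2 hU4 hU5
  have hcc := isNullReducing_orthogonal_ccSpace (A := A) (B := B) (C := C) hPsa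
  refine ⟨h12, fun h1 k => ?_, fun h3 => ?_⟩
  · rw [Submodule.eq_orthogonal_of_disjoint _ hcc.le_sccKer h1,
      Submodule.eq_orthogonal_of_disjoint _ hcc.le_ssccKer (h12.mp h1)]
    exact ⟨hcc.proj_mapsTo k, hcc.proj_mapsTo k⟩
  · exact (isNullReducing_sccKer hPsum hPidem hPorth hU1 hU2 hU4 hU5 (fun k => (h3 k).1)
      fun k => (h3 k).2).disjoint_ccSpace hPsa

/-- **Equivalence of strict close-connectedness and shifted strict close-connectedness
relative to the closely connected subspace.**  For a GR-unitary colligation the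
following are equivalent: (1) `H_cc ∩ N = {0}`; (2) `H_cc ∩ N' = {0}`;
(3) `N` and `N'` are both invariant under every projection `P_k`. -/
theorem scc_iff_sscc_iff_proj_invariant
    (hd : 0 < d)
    (P : Fin d → H →L[ℂ] H)
    (hPsa : ∀ k, IsSelfAdjoint (P k))
    (hPidem : ∀ k, P k * P k = P k)
    (hPorth : ∀ j k, j ≠ k → P j * P k = 0)
    (hPsum : ∑ k, P k = 1)
    (A : H →L[ℂ] H) (B : E →L[ℂ] H) (C : H →L[ℂ] F) (D : E →L[ℂ] F)
    (hU1 : A * adjoint A + B ∘L adjoint B = 1)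
    (hU2 : A ∘L adjoint C + B ∘L adjoint D = 0)
    (hU3 : C ∘L adjoint C + D ∘L adjoint D = 1)
    (hU4 : adjoint A * A + adjoint C ∘L C = 1)
    (hU5 : adjoint A ∘L B + adjoint C ∘L D = 0)
    (hU6 : adjoint B ∘L B + adjoint D ∘L D = 1) :
    ((ccSpace A P B C : Set H) ∩ sccKer A P B C = {0} ↔
      (ccSpace A P B C : Set H) ∩ ssccKer A P B C = {0}) ∧
    ((ccSpace A P B C : Set H) ∩ sccKer A P B C = {0} ↔
      ∀ k, (P k) '' sccKer A P B C ⊆ sccKer A P B C ∧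
        (P k) '' ssccKer A P B C ⊆ ssccKer A P B C) :=
  scc_iff_sscc_iff_proj_invariant_general P hPsa hPidem hPorth hPsum A B C D hU1 hU2 hU4 hU5
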